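/- Let ν > −1. The inequalities (1−p)·ℐ_{ν+1}(x) + p·ℐ_{ν+1}(x)/ℐ_ν(x) > 1 > (1−q)·ℐ_{ν+1}(x) + q·ℐ_{ν+1}(x)/ℐ_ν(x) hold for all x in (0, ∞) if and only if p ≤ (ν+1)/(ν+2) and q ≥ 1. -/

import Mathlib

/-!
Put `μ = ν + 1`, `A = ℐ_ν(x)`, `B = ℐ_{ν+1}(x)`; both are power series in `y = x² / 4`.
At the critical weight `p = μ / (μ + 1)` one has
`(μ + 1) A ((1 - p) B + p B / A - 1) = AB + μB - (μ + 1)A`, and by the Cauchy product this is a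
power series in `y` whose coefficients vanish in degrees `0` and `1` and are positive from
degree `2` on: it is positive, but `O(y²)` as `y → 0`. Raising the weight lowers the expression
by a multiple of `B (1 - 1 / A) ≥ y / μ`, so every larger `p` fails for small `y`. The weight
`q = 1` gives `B / A < 1`, while for `q < 1` the expression is at least `(1 - q) B - |q|`, which
is unbounded because `B ≥ 1 + y / (μ + 1)`.
-/

/-- The normalized modified Bessel function of the first kind,
`ℐ_ν(x) = 2^ν Γ(ν+1) x^{-ν} I_ν(x) = ∑ (1/4)^n x^(2n) / ((ν+1)_n n!)`. -/
noncomputable def besselIn (ν x : ℝ) : ℝ :=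
  ∑' n : ℕ, ((1 / 4 : ℝ) ^ n * x ^ (2 * n)) * Real.Gamma (ν + 1) /
    (Real.Gamma (ν + n + 1) * n.factorial)

open Finset
open scoped Nat

lemma ascPochhammer_eval_succ_left {S : Type*} [CommSemiring S] (s : S) (n : ℕ) :
    (ascPochhammer S (n + 1)).eval s = s * (ascPochhammer S n).eval (s + 1) := by
  simp [ascPochhammer_succ_left]

lemma one_le_ascPochhammer_eval {S : Type*} [Semiring S] [PartialOrder S] [IsStrictOrderedRing S]
    {s : S} (hs : 1 ≤ s) (n : ℕ) : 1 ≤ (ascPochhammer S n).eval s := by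
  induction n with
  | zero => simp
  | succ n ih =>
    rw [ascPochhammer_succ_eval]
    exact one_le_mul_of_one_le_of_one_le ih (le_add_of_le_of_nonneg hs n.cast_nonneg)

lemma min_one_le_ascPochhammer_eval {s : ℝ} (hs : 0 < s) (n : ℕ) :
    min 1 s ≤ (ascPochhammer ℝ n).eval s := by
  cases n with
  | zero => simp
  | succ n =>
    rw [ascPochhammer_eval_succ_left]
    exact (min_le_right _ _).trans
      (le_mul_of_one_le_right hs.le (one_le_ascPochhammer_eval (by linarith) n))

lemma Real.Gamma_add_nat_eq_mul_ascPochhammer {μ : ℝ} (hμ : ∀ k : ℕ, μ ≠ -k) (n : ℕ) :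
    Real.Gamma (μ + n) = Real.Gamma μ * (ascPochhammer ℝ n).eval μ := by
  induction n with
  | zero => simp
  | succ n ih =>
    have hne : μ + n ≠ 0 := fun h => hμ n (by linarith)
    rw [Nat.cast_succ, ← add_assoc, Real.Gamma_add_one hne, ih, ascPochhammer_succ_eval]
    ring

noncomputable def besselCoeff (μ : ℝ) (n : ℕ) : ℝ := ((ascPochhammer ℝ n).eval μ * n !)⁻¹

/-- The hypergeometric series `₀F₁(; μ; y)`. -/
noncomputable def besselSeries (μ y : ℝ) : ℝ := ∑' n, besselCoeff μ n * y ^ n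

lemma besselIn_eq_besselSeries {ν : ℝ} (hν : ∀ k : ℕ, ν + 1 ≠ -k) (x : ℝ) :
    besselIn ν x = besselSeries (ν + 1) (x ^ 2 / 4) := by
  have hΓ : Real.Gamma (ν + 1) ≠ 0 := Real.Gamma_ne_zero hν
  refine tsum_congr fun n => ?_
  rw [add_right_comm, Real.Gamma_add_nat_eq_mul_ascPochhammer hν, besselCoeff, pow_mul,
    div_pow (x ^ 2), one_div, inv_pow]
  field_simp

section

variable {μ : ℝ}

@[simp]
lemma besselCoeff_zero (μ : ℝ) : besselCoeff μ 0 = 1 := by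
  simp [besselCoeff]

lemma besselCoeff_succ (μ : ℝ) (n : ℕ) :
    besselCoeff μ (n + 1) = besselCoeff μ n / ((μ + n) * (n + 1)) := by
  simp only [besselCoeff, ascPochhammer_succ_eval, Nat.factorial_succ, Nat.cast_mul,
    Nat.cast_succ, div_eq_mul_inv, ← mul_inv]
  ring

@[simp]
lemma besselCoeff_one (μ : ℝ) : besselCoeff μ 1 = μ⁻¹ := by
  simp [besselCoeff]

lemma besselCoeff_pos (hμ : 0 < μ) (n : ℕ) : 0 < besselCoeff μ n := by
  have := ascPochhammer_pos n μ hμ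
  unfold besselCoeff
  positivity

lemma add_mul_besselCoeff_add_one (hμ : 0 < μ) (n : ℕ) :
    (μ + n) * besselCoeff (μ + 1) n = μ * besselCoeff μ n := by
  have hpoch := (ascPochhammer_succ_eval n μ).symm.trans (ascPochhammer_eval_succ_left μ n)
  have h₀ := ascPochhammer_pos n μ hμ
  have h₁ := ascPochhammer_pos n (μ + 1) (by linarith)
  simp only [besselCoeff]
  field_simp
  linarith

lemma besselCoeff_add_one_le (hμ : 0 < μ) (n : ℕ) : besselCoeff (μ + 1) n ≤ besselCoeff μ n := by
  have h := add_mul_besselCoeff_add_one hμ n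
  have := besselCoeff_pos hμ n
  have : (0 : ℝ) ≤ n := n.cast_nonneg
  nlinarith

lemma summable_norm_besselCoeff_mul_pow (hμ : 0 < μ) (y : ℝ) :
    Summable fun n => ‖besselCoeff μ n * y ^ n‖ := by
  refine .of_nonneg_of_le (fun n => norm_nonneg _) (fun n => ?_)
    ((Real.summable_pow_div_factorial |y|).mul_left (min 1 μ)⁻¹)
  have hpoch := min_one_le_ascPochhammer_eval hμ n
  have hmin : 0 < min 1 μ := lt_min one_pos hμ
  calc ‖besselCoeff μ n * y ^ n‖ = ((ascPochhammer ℝ n).eval μ)⁻¹ * (|y| ^ n / n !) := by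
        rw [norm_mul, norm_pow, Real.norm_eq_abs, Real.norm_eq_abs,
          abs_of_pos (besselCoeff_pos hμ n), besselCoeff, mul_inv]
        ring
    _ ≤ (min 1 μ)⁻¹ * (|y| ^ n / n !) :=
        mul_le_mul_of_nonneg_right (inv_anti₀ hmin hpoch) (by positivity)

lemma hasSum_besselSeries (hμ : 0 < μ) (y : ℝ) :
    HasSum (fun n => besselCoeff μ n * y ^ n) (besselSeries μ y) :=
  (summable_norm_besselCoeff_mul_pow hμ y).of_norm.hasSum

lemma one_add_div_le_besselSeries (hμ : 0 < μ) {y : ℝ} (hy : 0 ≤ y) :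
    1 + y / μ ≤ besselSeries μ y := by
  have := sum_le_hasSum (range 2) (fun n _ => by have := besselCoeff_pos hμ n; positivity)
    (hasSum_besselSeries hμ y)
  simpa [sum_range_succ, div_eq_inv_mul] using this

lemma one_le_besselSeries (hμ : 0 < μ) {y : ℝ} (hy : 0 ≤ y) : 1 ≤ besselSeries μ y := by
  have := one_add_div_le_besselSeries hμ hy
  have : 0 ≤ y / μ := by positivity
  linarith

lemma besselSeries_add_one_lt (hμ : 0 < μ) {y : ℝ} (hy : 0 < y) :
    besselSeries (μ + 1) y < besselSeries μ y := by
  refine hasSum_lt (i := 1) (fun n => ?_) ?_ (hasSum_besselSeries (by linarith) y)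
    (hasSum_besselSeries hμ y)
  · exact mul_le_mul_of_nonneg_right (besselCoeff_add_one_le hμ n) (by positivity)
  · simp only [besselCoeff_one, pow_one]
    gcongr
    linarith

lemma mul_besselCoeff_succ_lt (hμ : 0 < μ) (n : ℕ) :
    μ * besselCoeff μ (n + 1) <
      besselCoeff μ n / (μ + 1) + (μ + 1) * besselCoeff (μ + 1) (n + 1) := by
  have hc := besselCoeff_pos hμ n
  have hshift : besselCoeff (μ + 1) n = μ * besselCoeff μ n / (μ + n) := by
    rw [← add_mul_besselCoeff_add_one hμ n]
    field_simp
  rw [besselCoeff_succ, besselCoeff_succ, hshift]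
  field_simp
  have hgap : μ * (μ + 1) * n < (μ + n) * (μ + 1 + n) * (n + 1) :=
    calc μ * (μ + 1) * n < μ * (μ + 1) * (n + 1) := by gcongr; linarith
      _ ≤ (μ + n) * (μ + 1 + n) * (n + 1) := by gcongr ?_ * ?_ * _ <;> linarith
  linarith

/-- `(μ + 1) A (besselHuygens μ p y - 1)` at the critical weight `p = μ / (μ + 1)`,
where `A = besselSeries μ y`. -/
noncomputable def besselDefect (μ y : ℝ) : ℝ :=
  besselSeries μ y * besselSeries (μ + 1) y + μ * besselSeries (μ + 1) y
    - (μ + 1) * besselSeries μ y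

noncomputable def besselDefectCoeff (μ : ℝ) (n : ℕ) : ℝ :=
  ∑ kl ∈ antidiagonal n, besselCoeff μ kl.1 * besselCoeff (μ + 1) kl.2
    + μ * besselCoeff (μ + 1) n - (μ + 1) * besselCoeff μ n

lemma hasSum_besselDefect (hμ : 0 < μ) (y : ℝ) :
    HasSum (fun n => besselDefectCoeff μ n * y ^ n) (besselDefect μ y) := by
  have hμ₁ : 0 < μ + 1 := by linarith
  have hf := summable_norm_besselCoeff_mul_pow hμ y
  have hg := summable_norm_besselCoeff_mul_pow hμ₁ y
  have hprod : HasSum (fun n => ∑ kl ∈ antidiagonal n,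
      besselCoeff μ kl.1 * y ^ kl.1 * (besselCoeff (μ + 1) kl.2 * y ^ kl.2))
      (besselSeries μ y * besselSeries (μ + 1) y) := by
    rw [besselSeries, besselSeries, tsum_mul_tsum_eq_tsum_sum_antidiagonal_of_summable_norm hf hg]
    exact (summable_norm_sum_mul_antidiagonal_of_summable_norm hf hg).of_norm.hasSum
  have hcauchy : ∀ n, ∑ kl ∈ antidiagonal n,
      besselCoeff μ kl.1 * y ^ kl.1 * (besselCoeff (μ + 1) kl.2 * y ^ kl.2) =
      (∑ kl ∈ antidiagonal n, besselCoeff μ kl.1 * besselCoeff (μ + 1) kl.2) * y ^ n := by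
    intro n
    rw [sum_mul]
    refine sum_congr rfl fun kl hkl => ?_
    rw [← mem_antidiagonal.mp hkl, pow_add]
    ring
  have hterm : (fun n => besselDefectCoeff μ n * y ^ n) = fun n =>
      ∑ kl ∈ antidiagonal n, besselCoeff μ kl.1 * y ^ kl.1 * (besselCoeff (μ + 1) kl.2 * y ^ kl.2)
        + μ * (besselCoeff (μ + 1) n * y ^ n) - (μ + 1) * (besselCoeff μ n * y ^ n) := by
    funext n
    rw [hcauchy, besselDefectCoeff]
    ring
  rw [hterm, besselDefect]
  exact (hprod.add ((hasSum_besselSeries hμ₁ y).mul_left μ)).sub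
    ((hasSum_besselSeries hμ y).mul_left (μ + 1))

@[simp]
lemma besselDefectCoeff_zero (μ : ℝ) : besselDefectCoeff μ 0 = 0 := by
  simp only [besselDefectCoeff, HasAntidiagonal.antidiagonal_zero, sum_singleton, besselCoeff_zero,
    mul_one]
  ring

lemma besselDefectCoeff_one (hμ : 0 < μ) : besselDefectCoeff μ 1 = 0 := by
  have : μ + 1 ≠ 0 := by linarith
  simp only [besselDefectCoeff, Nat.sum_antidiagonal_succ, HasAntidiagonal.antidiagonal_zero,
    sum_singleton, besselCoeff_zero, besselCoeff_one, zero_add, one_mul, mul_one]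
  field_simp
  ring

lemma besselDefectCoeff_pos (hμ : 0 < μ) (n : ℕ) : 0 < besselDefectCoeff μ (n + 2) := by
  have hμ₁ : 0 < μ + 1 := by linarith
  -- the terms `(0, n + 2)`, `(n + 2, 0)` and `(n + 1, 1)` of the Cauchy sum already suffice
  have hmid := Finset.single_le_sum
    (f := fun kl => besselCoeff μ (kl.1 + 1) * besselCoeff (μ + 1) (kl.2 + 1))
    (fun kl _ => (mul_pos (besselCoeff_pos hμ _) (besselCoeff_pos hμ₁ _)).le)
    (mem_antidiagonal.mpr (add_zero n) : (n, 0) ∈ antidiagonal n)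
  have hkey := mul_besselCoeff_succ_lt hμ (n + 1)
  rw [besselDefectCoeff, Nat.sum_antidiagonal_succ, Nat.sum_antidiagonal_succ']
  simp only [zero_add, besselCoeff_one, besselCoeff_zero, one_mul, mul_one] at hmid ⊢
  rw [div_eq_mul_inv] at hkey
  linarith

lemma besselDefectCoeff_nonneg (hμ : 0 < μ) : ∀ n, 0 ≤ besselDefectCoeff μ n
  | 0 => (besselDefectCoeff_zero μ).ge
  | 1 => (besselDefectCoeff_one hμ).ge
  | n + 2 => (besselDefectCoeff_pos hμ n).le

lemma besselDefect_pos (hμ : 0 < μ) {y : ℝ} (hy : 0 < y) : 0 < besselDefect μ y :=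
  (mul_pos (besselDefectCoeff_pos hμ 0) (pow_pos hy 2)).trans_le <|
    le_hasSum (hasSum_besselDefect hμ y) 2 fun n _ =>
      mul_nonneg (besselDefectCoeff_nonneg hμ n) (pow_nonneg hy.le n)

lemma besselDefect_le (hμ : 0 < μ) {y : ℝ} (hy₀ : 0 ≤ y) (hy₁ : y ≤ 1) :
    besselDefect μ y ≤ besselDefect μ 1 * y ^ 2 := by
  refine hasSum_le (fun n => ?_) (hasSum_besselDefect hμ y)
    (by simpa using (hasSum_besselDefect hμ 1).mul_right (y ^ 2))
  match n with
  | 0 => simp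
  | 1 => simp [besselDefectCoeff_one hμ]
  | n + 2 =>
    exact mul_le_mul_of_nonneg_left (pow_le_pow_of_le_one hy₀ hy₁ (by omega))
      (besselDefectCoeff_nonneg hμ _)

noncomputable def besselHuygens (μ p y : ℝ) : ℝ :=
  (1 - p) * besselSeries (μ + 1) y + p * besselSeries (μ + 1) y / besselSeries μ y

lemma mul_besselHuygens_sub_one (hμ : 0 < μ) (p : ℝ) {y : ℝ} (hy : 0 ≤ y) :
    (μ + 1) * besselSeries μ y * (besselHuygens μ p y - 1) =
      besselDefect μ y
        - ((μ + 1) * p - μ) * (besselSeries (μ + 1) y * (besselSeries μ y - 1)) := by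
  have := one_le_besselSeries hμ hy
  rw [besselHuygens, besselDefect]
  field_simp
  ring

lemma one_lt_besselHuygens (hμ : 0 < μ) {p : ℝ} (hp : p ≤ μ / (μ + 1)) {y : ℝ} (hy : 0 < y) :
    1 < besselHuygens μ p y := by
  have hμ₁ : 0 < μ + 1 := by linarith
  have hA := one_le_besselSeries hμ hy.le
  have hB := one_le_besselSeries hμ₁ hy.le
  have hp' : (μ + 1) * p - μ ≤ 0 := by
    rw [le_div_iff₀ hμ₁] at hp
    linarith
  have hpos : 0 < (μ + 1) * besselSeries μ y * (besselHuygens μ p y - 1) := by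
    rw [mul_besselHuygens_sub_one hμ p hy.le]
    have : 0 ≤ besselSeries (μ + 1) y * (besselSeries μ y - 1) := by nlinarith
    nlinarith [besselDefect_pos hμ hy]
  linarith [pos_of_mul_pos_right hpos (by positivity)]

lemma exists_besselHuygens_le_one (hμ : 0 < μ) {p : ℝ} (hp : μ / (μ + 1) < p) :
    ∃ y, 0 < y ∧ besselHuygens μ p y ≤ 1 := by
  have hμ₁ : 0 < μ + 1 := by linarith
  set ε := (μ + 1) * p - μ
  have hε : 0 < ε := by
    rw [div_lt_iff₀ hμ₁] at hp
    linarith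
  set K := besselDefect μ 1
  have hK : 0 < K := besselDefect_pos hμ one_pos
  -- small enough that the bound `K y ^ 2` on the defect stays below the linear term `ε y / μ`
  set y := min 1 (ε / (μ * K))
  have hy : 0 < y := by positivity
  have hA := one_add_div_le_besselSeries hμ hy.le
  have hB := one_le_besselSeries hμ₁ hy.le
  have hdefect : besselDefect μ y ≤ ε * (besselSeries (μ + 1) y * (besselSeries μ y - 1)) :=
    calc besselDefect μ y ≤ K * y * y := by
          rw [mul_assoc, ← sq]; exact besselDefect_le hμ hy.le (min_le_left _ _)
      _ ≤ K * (ε / (μ * K)) * y := by gcongr; exact min_le_right _ _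
      _ = ε * (y / μ) := by field_simp
      _ ≤ ε * (besselSeries (μ + 1) y * (besselSeries μ y - 1)) := by
          gcongr
          nlinarith [div_nonneg hy.le hμ.le]
  refine ⟨y, hy, ?_⟩
  have hnonpos : (μ + 1) * besselSeries μ y * (besselHuygens μ p y - 1) ≤ 0 := by
    rw [mul_besselHuygens_sub_one hμ p hy.le]
    linarith
  linarith [nonpos_of_mul_nonpos_right hnonpos (by nlinarith [div_nonneg hy.le hμ.le])]

lemma besselHuygens_lt_one (hμ : 0 < μ) {q : ℝ} (hq : 1 ≤ q) {y : ℝ} (hy : 0 < y) :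
    besselHuygens μ q y < 1 := by
  have hA := one_le_besselSeries hμ hy.le
  have hB := one_le_besselSeries (by linarith : 0 < μ + 1) hy.le
  have hBA := besselSeries_add_one_lt hμ hy
  have hidentity : besselSeries μ y * (besselHuygens μ q y - 1) =
      (1 - q) * (besselSeries (μ + 1) y * (besselSeries μ y - 1))
        - (besselSeries μ y - besselSeries (μ + 1) y) := by
    rw [besselHuygens]
    field_simp
    ring
  have hneg : besselSeries μ y * (besselHuygens μ q y - 1) < 0 := by
    have : 0 ≤ besselSeries (μ + 1) y * (besselSeries μ y - 1) := by nlinarith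
    rw [hidentity]
    nlinarith
  linarith [neg_of_mul_neg_right hneg (by linarith)]

lemma exists_one_le_besselHuygens (hμ : 0 < μ) {q : ℝ} (hq : q < 1) :
    ∃ y, 0 < y ∧ 1 ≤ besselHuygens μ q y := by
  have hμ₁ : 0 < μ + 1 := by linarith
  have hq' : 0 < 1 - q := by linarith
  set y := (μ + 1) * (1 + |q|) / (1 - q)
  have hy : 0 < y := by positivity
  have hA := one_le_besselSeries hμ hy.le
  have hB := one_add_div_le_besselSeries hμ₁ hy.le
  have hBA := besselSeries_add_one_lt hμ hy
  have hratio : -|q| ≤ q * besselSeries (μ + 1) y / besselSeries μ y := by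
    have h₀ : 0 ≤ besselSeries (μ + 1) y / besselSeries μ y :=
      div_nonneg (by linarith [div_nonneg hy.le hμ₁.le]) (by linarith)
    have h₁ : besselSeries (μ + 1) y / besselSeries μ y ≤ 1 :=
      (div_le_one (by linarith)).mpr hBA.le
    rw [mul_div_assoc]
    nlinarith [neg_abs_le q, le_abs_self q]
  refine ⟨y, hy, ?_⟩
  calc 1 ≤ (1 - q) * (1 + y / (μ + 1)) - |q| := by
        have : (1 - q) * (y / (μ + 1)) = 1 + |q| := by
          simp only [y]
          field_simp
        linarith
    _ ≤ besselHuygens μ q y := by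
        rw [besselHuygens, sub_eq_add_neg]
        exact add_le_add (mul_le_mul_of_nonneg_left hB hq'.le) hratio

theorem besselHuygens_iff (hμ : 0 < μ) (p q : ℝ) :
    (∀ y, 0 < y → 1 < besselHuygens μ p y ∧ besselHuygens μ q y < 1) ↔
      p ≤ μ / (μ + 1) ∧ 1 ≤ q := by
  refine ⟨fun H => ⟨?_, ?_⟩, fun ⟨hp, hq⟩ y hy =>
    ⟨one_lt_besselHuygens hμ hp hy, besselHuygens_lt_one hμ hq hy⟩⟩
  · by_contra! hp
    obtain ⟨y, hy, hle⟩ := exists_besselHuygens_le_one hμ hp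
    exact (H y hy).1.not_ge hle
  · by_contra! hq
    obtain ⟨y, hy, hle⟩ := exists_one_le_besselHuygens hμ hq
    exact (H y hy).2.not_ge hle

end

lemma forall_pos_sq_div_four_iff {P : ℝ → Prop} :
    (∀ x : ℝ, 0 < x → P (x ^ 2 / 4)) ↔ ∀ y : ℝ, 0 < y → P y := by
  refine ⟨fun h y hy => ?_, fun h x hx => h _ (by positivity)⟩
  have := h (2 * √y) (by positivity)
  rwa [mul_pow, Real.sq_sqrt hy.le, show (2 : ℝ) ^ 2 * y / 4 = y by ring] at this

theorem besselI_huygens_iff (ν p q : ℝ) (hν : -1 < ν) :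
    (∀ x : ℝ, 0 < x →
      (1 - p) * besselIn (ν + 1) x + p * besselIn (ν + 1) x / besselIn ν x > 1 ∧
      1 > (1 - q) * besselIn (ν + 1) x + q * besselIn (ν + 1) x / besselIn ν x) ↔
    (p ≤ (ν + 1) / (ν + 2) ∧ q ≥ 1) := by
  have hμ : 0 < ν + 1 := by linarith
  have hpole : ∀ μ : ℝ, 0 < μ → ∀ k : ℕ, μ ≠ -k := fun μ hμ k =>
    ((neg_nonpos.mpr k.cast_nonneg).trans_lt hμ).ne'
  have hseries : ∀ r x, (1 - r) * besselIn (ν + 1) x + r * besselIn (ν + 1) x / besselIn ν x =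
      besselHuygens (ν + 1) r (x ^ 2 / 4) := fun r x => by
    rw [besselIn_eq_besselSeries (hpole _ hμ), besselIn_eq_besselSeries (hpole _ (by linarith)),
      besselHuygens]
  simp only [hseries, gt_iff_lt, ge_iff_le]
  rw [forall_pos_sq_div_four_iff (P := fun y => 1 < besselHuygens (ν + 1) p y ∧
    besselHuygens (ν + 1) q y < 1), show ν + 2 = ν + 1 + 1 by ring]
  exact besselHuygens_iff hμ p q
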